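/- arXiv:2502.00976 — 2 statements merged into one kernel-verified Lean document; each statement's English description precedes it below -/
import Mathlib

section
/- The Müntz–Laguerre functions φ₁(s) = √(2 Re b₁)/(s + b₁) and φ_k(s) = (√(2 Re b_k)/(s + b_k)) · ∏_{k'=1}^{k−1} (s − conj(b_{k'}))/(s + b_{k'}) for k ≥ 2, with Re b_k > 0 for all k, form an orthonormal system in the Hardy space H² of the right half-plane; that is, (1/2π) ∫_{−∞}^{∞} φ_j(iω) · conj(φ_k(iω)) dω = δ_{jk}. -/
/-!
On the imaginary axis every Blaschke factor `(s - conj b) / (s + b)` has modulus one, so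
`|φ_k(iω)|² = 2 Re b_k / |iω + b_k|²`, which is `2π` times a Cauchy density. For `j < k` the
factors of index `< j` cancel in `φ_j · conj φ_k`, leaving a rational function without poles in
`re s ≤ 0` that decays like `|s|⁻²`; integrating it around rectangles `[-R, 0] × [-R, R]` and
letting `R → ∞` shows that its integral over the imaginary axis vanishes.
-/

open Complex MeasureTheory Finset Filter Topology
open scoped ComplexConjugate Interval

noncomputable section

namespace MuntzLaguerre

section LeftHalfPlane

variable {s a : ℂ}

lemma re_le_norm_sub (hs : s.re ≤ 0) : a.re ≤ ‖s - a‖ :=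
  (le_abs.2 (Or.inr (by simp only [sub_re, neg_sub]; linarith))).trans (abs_re_le_norm _)

lemma sub_ne_zero_of_re_nonpos (hs : s.re ≤ 0) (ha : 0 < a.re) : s - a ≠ 0 :=
  norm_pos_iff.1 (ha.trans_le (re_le_norm_sub hs))

lemma one_add_norm_le_mul_norm_sub (hs : s.re ≤ 0) (ha : 0 < a.re) :
    1 + ‖s‖ ≤ (1 + (1 + ‖a‖) / a.re) * ‖s - a‖ := by
  have hre := re_le_norm_sub (a := a) hs
  have htri : ‖s‖ ≤ ‖s - a‖ + ‖a‖ := norm_le_norm_sub_add s a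
  have : 1 + ‖a‖ ≤ (1 + ‖a‖) / a.re * ‖s - a‖ := by
    rw [div_mul_eq_mul_div, le_div_iff₀ ha]
    exact mul_le_mul_of_nonneg_left hre (by positivity)
  linarith

lemma add_ne_zero_of_re_nonneg (hs : 0 ≤ s.re) (ha : 0 < a.re) : s + a ≠ 0 := fun h => by
  have := congrArg re h
  rw [add_re, zero_re] at this
  linarith

lemma norm_add_le_norm_sub_conj (hs : s.re ≤ 0) (ha : 0 ≤ a.re) : ‖s + a‖ ≤ ‖s - conj a‖ := by
  rw [← sq_le_sq₀ (norm_nonneg _) (norm_nonneg _), ← normSq_eq_norm_sq, ← normSq_eq_norm_sq,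
    normSq_apply, normSq_apply]
  simp only [add_re, add_im, sub_re, sub_im, conj_re, conj_im]
  nlinarith [mul_nonneg (neg_nonneg.2 hs) ha]

lemma norm_sub_conj_eq_norm_add (hs : s.re = 0) : ‖s - conj a‖ = ‖s + a‖ := by
  rw [← sq_eq_sq₀ (norm_nonneg _) (norm_nonneg _), ← normSq_eq_norm_sq, ← normSq_eq_norm_sq,
    normSq_apply, normSq_apply]
  simp only [add_re, add_im, sub_re, sub_im, conj_re, conj_im, hs]
  ring

end LeftHalfPlane

section ContourShift

variable {g : ℂ → ℂ} {C : ℝ}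

lemma integrable_comp_ofReal_mul_I (hc : ContinuousOn g {s | s.re ≤ 0})
    (hg : ∀ s : ℂ, s.re ≤ 0 → ‖g s‖ ≤ C / (1 + ‖s‖ ^ 2)) :
    Integrable fun ω : ℝ => g (ω * I) := by
  have hcont : Continuous fun ω : ℝ => g (ω * I) :=
    hc.comp_continuous (by fun_prop) fun ω => by simp
  refine (integrable_inv_one_add_sq.const_mul C).mono' hcont.aestronglyMeasurable
    (Eventually.of_forall fun ω => ?_)
  simpa [div_eq_mul_inv] using hg (ω * I) (by simp)

lemma norm_intervalIntegral_ofReal_mul_I_le (hd : DifferentiableOn ℂ g {s | s.re ≤ 0})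
    (hg : ∀ s : ℂ, s.re ≤ 0 → ‖g s‖ ≤ C / (1 + ‖s‖ ^ 2)) {R : ℝ} (hR : 0 < R) :
    ‖∫ y in -R..R, g (y * I)‖ ≤ 4 * C / R := by
  have hC : 0 ≤ C := by simpa using (norm_nonneg _).trans (hg 0 (by simp))
  have hfar : ∀ s : ℂ, s.re ≤ 0 → R ≤ ‖s‖ → ‖g s‖ ≤ C / R ^ 2 := fun s hs hRs =>
    (hg s hs).trans (by gcongr; nlinarith)
  have hrect := integral_boundary_rect_eq_zero_of_differentiableOn g ⟨-R, -R⟩ ⟨0, R⟩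
    (hd.mono fun s hs => by
      have := hs.1
      rw [Set.uIcc_of_le (by simp; linarith)] at this
      exact this.2)
  simp only [ofReal_zero, zero_add] at hrect
  have hhoriz : ∀ c : ℝ, |c| = R → ‖∫ x in -R..0, g (x + c * I)‖ ≤ C / R ^ 2 * R := by
    intro c hc
    convert intervalIntegral.norm_integral_le_of_norm_le_const
      (f := fun x : ℝ => g (x + c * I)) fun x hx => hfar _ ?_ ?_ using 2
    · simp [abs_of_pos hR]
    · rw [Set.uIoc_of_le (by linarith)] at hx
      simpa using hx.2
    · simpa [hc] using abs_im_le_norm ((x : ℂ) + c * I)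
  have hvert : ‖∫ y in -R..R, g ((-R : ℝ) + y * I)‖ ≤ C / R ^ 2 * (2 * R) := by
    convert intervalIntegral.norm_integral_le_of_norm_le_const
      (f := fun y : ℝ => g ((-R : ℝ) + y * I)) fun y _ => hfar _ ?_ ?_ using 2
    · rw [abs_of_pos (by linarith)]; ring
    · simp; linarith
    · simpa [abs_of_pos hR] using abs_re_le_norm (((-R : ℝ) : ℂ) + y * I)
  have hI : ∀ z : ℂ, ‖I • z‖ = ‖z‖ := fun z => by simp
  calc ‖∫ y in -R..R, g (y * I)‖
      = ‖(∫ x in -R..0, g (x + R * I)) - (∫ x in -R..0, g (x + (-R : ℝ) * I))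
          + I • ∫ y in -R..R, g ((-R : ℝ) + y * I)‖ := by
        rw [← hI]; congr 1; linear_combination hrect
    _ ≤ C / R ^ 2 * R + C / R ^ 2 * R + C / R ^ 2 * (2 * R) := by
        refine (norm_add_le _ _).trans (add_le_add ((norm_sub_le _ _).trans
          (add_le_add (hhoriz R (abs_of_pos hR)) (hhoriz (-R) (by simp [abs_of_pos hR]))))
          ((hI _).trans_le hvert))
    _ = 4 * C / R := by field_simp; ring

theorem integral_ofReal_mul_I_eq_zero (hd : DifferentiableOn ℂ g {s | s.re ≤ 0})
    (hg : ∀ s : ℂ, s.re ≤ 0 → ‖g s‖ ≤ C / (1 + ‖s‖ ^ 2)) :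
    ∫ ω : ℝ, g (ω * I) = 0 := by
  have hlim : Tendsto (fun R : ℝ => ∫ y in -R..R, g (y * I)) atTop (𝓝 (∫ ω : ℝ, g (ω * I))) :=
    intervalIntegral_tendsto_integral (integrable_comp_ofReal_mul_I hd.continuousOn hg)
      tendsto_neg_atTop_atBot tendsto_id
  have hdecay : Tendsto (fun R : ℝ => 4 * C / R) atTop (𝓝 0) :=
    tendsto_const_nhds.div_atTop tendsto_id
  refine tendsto_nhds_unique hlim (squeeze_zero_norm' ?_ hdecay)
  filter_upwards [eventually_gt_atTop 0] with R hR
  exact norm_intervalIntegral_ofReal_mul_I_le hd hg hR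

end ContourShift

def blaschkeProduct (b : ℕ → ℂ) (k : ℕ) (s : ℂ) : ℂ :=
  ∏ m ∈ range k, (s - conj (b m)) / (s + b m)

def muntzLaguerre (b : ℕ → ℂ) (k : ℕ) (s : ℂ) : ℂ :=
  (Real.sqrt (2 * (b k).re) : ℂ) / (s + b k) * blaschkeProduct b k s

/-- For `j < k`, the extension of `muntzLaguerre b j * conj (muntzLaguerre b k)` from the
imaginary axis to `re s ≤ 0`. -/
def crossKernel (b : ℕ → ℂ) (j k : ℕ) (s : ℂ) : ℂ :=
  -((Real.sqrt (2 * (b j).re) : ℂ) * Real.sqrt (2 * (b k).re)) /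
      ((s - conj (b j)) * (s - conj (b k))) *
    ∏ m ∈ Ico (j + 1) k, (s + b m) / (s - conj (b m))

variable {b : ℕ → ℂ}

section ImaginaryAxis

variable {s : ℂ}

lemma norm_blaschkeProduct (hb : ∀ k, 0 < (b k).re) (hs : s.re = 0) (k : ℕ) :
    ‖blaschkeProduct b k s‖ = 1 := by
  simp only [blaschkeProduct, norm_prod, norm_div, norm_sub_conj_eq_norm_add hs]
  exact prod_eq_one fun m _ =>
    div_self (norm_ne_zero_iff.2 (add_ne_zero_of_re_nonneg hs.ge (hb m)))

lemma muntzLaguerre_mul_conj_self (hb : ∀ k, 0 < (b k).re) (hs : s.re = 0) (k : ℕ) :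
    muntzLaguerre b k s * conj (muntzLaguerre b k s) =
      ((2 * (b k).re / ‖s + b k‖ ^ 2 : ℝ) : ℂ) := by
  rw [mul_conj', muntzLaguerre, norm_mul, norm_blaschkeProduct hb hs, mul_one, norm_div,
    norm_real, Real.norm_of_nonneg (Real.sqrt_nonneg _), ← ofReal_pow, div_pow,
    Real.sq_sqrt (by linarith [hb k])]

lemma muntzLaguerre_mul_conj_of_lt (hb : ∀ k, 0 < (b k).re) (hs : s.re = 0) {j k : ℕ}
    (hjk : j < k) :
    muntzLaguerre b j s * conj (muntzLaguerre b k s) = crossKernel b j k s := by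
  have hconj : conj s = -s := by
    apply Complex.ext <;> simp [hs]
  have hconjB : conj (blaschkeProduct b k s) = (blaschkeProduct b k s)⁻¹ :=
    (inv_eq_conj (norm_blaschkeProduct hb hs k)).symm
  have hsplit : blaschkeProduct b k s = blaschkeProduct b j s *
      ((s - conj (b j)) / (s + b j) * ∏ m ∈ Ico (j + 1) k, (s - conj (b m)) / (s + b m)) := by
    rw [blaschkeProduct, blaschkeProduct, ← prod_range_mul_prod_Ico _ hjk.le,
      prod_eq_prod_Ico_succ_bot hjk]
  have hinv : ∏ m ∈ Ico (j + 1) k, (s + b m) / (s - conj (b m)) =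
      (∏ m ∈ Ico (j + 1) k, (s - conj (b m)) / (s + b m))⁻¹ := by
    rw [← prod_inv_distrib]; simp only [inv_div]
  have hne : ∀ m, s - conj (b m) ≠ 0 := fun m =>
    sub_ne_zero_of_re_nonpos hs.le (by simpa using hb m)
  have hP : ∏ m ∈ Ico (j + 1) k, (s - conj (b m)) / (s + b m) ≠ 0 :=
    prod_ne_zero_iff.2 fun m _ => div_ne_zero (hne m) (add_ne_zero_of_re_nonneg hs.ge (hb m))
  have hBj : blaschkeProduct b j s ≠ 0 := by
    rw [← norm_ne_zero_iff, norm_blaschkeProduct hb hs]; exact one_ne_zero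
  have hconjk : conj (s + b k) = -(s - conj (b k)) := by rw [map_add, hconj]; ring
  rw [muntzLaguerre, muntzLaguerre, crossKernel, map_mul, map_div₀, hconjB, hconjk, hsplit,
    hinv, conj_ofReal]
  have := add_ne_zero_of_re_nonneg hs.ge (hb j)
  have := hne j
  have := hne k
  field_simp

end ImaginaryAxis

lemma differentiableOn_crossKernel (hb : ∀ k, 0 < (b k).re) (j k : ℕ) :
    DifferentiableOn ℂ (crossKernel b j k) {s | s.re ≤ 0} := by
  intro s hs
  have hne : ∀ m, s - conj (b m) ≠ 0 := fun m =>
    sub_ne_zero_of_re_nonpos hs (by simpa using hb m)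
  have hden : DifferentiableAt ℂ (fun s => (s - conj (b j)) * (s - conj (b k))) s := by
    fun_prop
  have hprod : DifferentiableAt ℂ
      (fun s => ∏ m ∈ Ico (j + 1) k, (s + b m) / (s - conj (b m))) s :=
    DifferentiableAt.fun_finsetProd fun m _ =>
      (differentiableAt_id.add_const _).div (differentiableAt_id.sub_const _) (hne m)
  exact (((differentiableAt_const _).div hden (mul_ne_zero (hne j) (hne k))).mul
    hprod).differentiableWithinAt

lemma norm_crossKernel_le (hb : ∀ k, 0 < (b k).re) (j k : ℕ) :
    ∃ C, ∀ s : ℂ, s.re ≤ 0 → ‖crossKernel b j k s‖ ≤ C / (1 + ‖s‖ ^ 2) := by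
  set c := ‖(Real.sqrt (2 * (b j).re) : ℂ) * Real.sqrt (2 * (b k).re)‖
  set M : ℕ → ℝ := fun m => 1 + (1 + ‖b m‖) / (b m).re
  have hM : ∀ m, 0 < M m := fun m => add_pos one_pos (div_pos (by positivity) (hb m))
  refine ⟨c * (M j * M k), fun s hs => ?_⟩
  have hre : ∀ m, 0 < (conj (b m)).re := fun m => by simpa using hb m
  have hfactor : ∀ m, 1 + ‖s‖ ≤ M m * ‖s - conj (b m)‖ := fun m => by
    simpa using one_add_norm_le_mul_norm_sub hs (hre m)
  have hpos : ∀ m, 0 < ‖s - conj (b m)‖ := fun m =>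
    norm_pos_iff.2 (sub_ne_zero_of_re_nonpos hs (hre m))
  have hprod : ‖∏ m ∈ Ico (j + 1) k, (s + b m) / (s - conj (b m))‖ ≤ 1 := by
    rw [norm_prod]
    exact prod_le_one (fun _ _ => norm_nonneg _) fun m _ => by
      rw [norm_div]
      exact div_le_one_of_le₀ (norm_add_le_norm_sub_conj hs (hb m).le) (norm_nonneg _)
  calc ‖crossKernel b j k s‖
      = c / (‖s - conj (b j)‖ * ‖s - conj (b k)‖) *
          ‖∏ m ∈ Ico (j + 1) k, (s + b m) / (s - conj (b m))‖ := by
        simp only [crossKernel, norm_mul, norm_div, norm_neg, c]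
    _ ≤ c / (‖s - conj (b j)‖ * ‖s - conj (b k)‖) :=
        mul_le_of_le_one_right (by positivity) hprod
    _ ≤ c * (M j * M k) / ((1 + ‖s‖) * (1 + ‖s‖)) := by
        rw [div_le_div_iff₀ (mul_pos (hpos j) (hpos k)) (by positivity), mul_assoc]
        refine mul_le_mul_of_nonneg_left ?_ (norm_nonneg _)
        calc (1 + ‖s‖) * (1 + ‖s‖)
            ≤ M j * ‖s - conj (b j)‖ * (M k * ‖s - conj (b k)‖) :=
              mul_le_mul (hfactor j) (hfactor k) (by positivity)
                (mul_nonneg (hM j).le (hpos j).le)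
          _ = M j * M k * (‖s - conj (b j)‖ * ‖s - conj (b k)‖) := by ring
    _ ≤ c * (M j * M k) / (1 + ‖s‖ ^ 2) := by
        gcongr
        · have := hM j; have := hM k; positivity
        · nlinarith [norm_nonneg s]

lemma integral_muntzLaguerre_mul_conj_self (hb : ∀ k, 0 < (b k).re) (k : ℕ) :
    ∫ ω : ℝ, muntzLaguerre b k (ω * I) * conj (muntzLaguerre b k (ω * I)) = 2 * Real.pi := by
  set γ : NNReal := ⟨(b k).re, (hb k).le⟩
  have hγ : γ ≠ 0 := fun h => (hb k).ne' (congrArg NNReal.toReal h)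
  have hcauchy : ∀ ω : ℝ, muntzLaguerre b k (ω * I) * conj (muntzLaguerre b k (ω * I)) =
      ((2 * Real.pi * ProbabilityTheory.cauchyPDFReal (-(b k).im) γ ω : ℝ) : ℂ) := fun ω => by
    rw [muntzLaguerre_mul_conj_self hb (by simp), ProbabilityTheory.cauchyPDFReal_def,
      show (γ : ℝ) = (b k).re from rfl, ← normSq_eq_norm_sq, normSq_apply]
    congr 1
    simp only [add_re, add_im, mul_re, mul_im, ofReal_re, ofReal_im, I_re, I_im]
    field_simp
    ring
  simp_rw [hcauchy, integral_complex_ofReal, integral_const_mul,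
    ProbabilityTheory.integral_cauchyPDFReal_eq_one _ hγ]
  push_cast
  ring

lemma integral_muntzLaguerre_mul_conj_of_lt (hb : ∀ k, 0 < (b k).re) {j k : ℕ} (hjk : j < k) :
    ∫ ω : ℝ, muntzLaguerre b j (ω * I) * conj (muntzLaguerre b k (ω * I)) = 0 := by
  obtain ⟨C, hC⟩ := norm_crossKernel_le hb j k
  rw [← integral_ofReal_mul_I_eq_zero (differentiableOn_crossKernel hb j k) hC]
  simp_rw [fun ω : ℝ => muntzLaguerre_mul_conj_of_lt hb (s := ω * I) (by simp) hjk]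

lemma integral_muntzLaguerre_mul_conj_of_ne (hb : ∀ k, 0 < (b k).re) {j k : ℕ} (hjk : j ≠ k) :
    ∫ ω : ℝ, muntzLaguerre b j (ω * I) * conj (muntzLaguerre b k (ω * I)) = 0 := by
  rcases hjk.lt_or_gt with hlt | hgt
  · exact integral_muntzLaguerre_mul_conj_of_lt hb hlt
  · calc ∫ ω : ℝ, muntzLaguerre b j (ω * I) * conj (muntzLaguerre b k (ω * I))
        = ∫ ω : ℝ, conj (muntzLaguerre b k (ω * I) * conj (muntzLaguerre b j (ω * I))) := by
          simp only [map_mul, conj_conj, mul_comm]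
      _ = 0 := by rw [integral_conj, integral_muntzLaguerre_mul_conj_of_lt hb hgt, map_zero]

end MuntzLaguerre

end

/-- Indexing: `φ k` here is `φ_{k+1}` of the paper. -/
theorem muntz_laguerre_orthonormal (b : ℕ → ℂ) (hb : ∀ k, 0 < (b k).re)
    (φ : ℕ → ℂ → ℂ)
    (hφ : ∀ k s, φ k s = (Real.sqrt (2 * (b k).re) : ℂ) / (s + b k) *
      ∏ k' ∈ Finset.range k, (s - (starRingEnd ℂ) (b k')) / (s + b k')) :
    ∀ j k : ℕ,
      (1 / (2 * Real.pi) : ℂ) *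
        ∫ ω : ℝ, φ j (ω * Complex.I) * (starRingEnd ℂ) (φ k (ω * Complex.I)) =
      if j = k then 1 else 0 := by
  obtain rfl : φ = MuntzLaguerre.muntzLaguerre b := funext fun k => funext (hφ k)
  intro j k
  split_ifs with hjk
  · subst hjk
    rw [MuntzLaguerre.integral_muntzLaguerre_mul_conj_self hb]
    field_simp
  · rw [MuntzLaguerre.integral_muntzLaguerre_mul_conj_of_ne hb hjk, mul_zero]
end

section
/- Consider the optimization problem: minimize (1/2)‖M‖_F² − ρ + (1/(νm)) Σᵢ ξᵢ over symmetric matrices M in a closed convex set C, ρ ∈ ℝ, ξ ∈ ℝ^m, subject to ⟨M, Γᵢ⟩ ≥ ρ − ξᵢ and ξᵢ ≥ 0 for all i, where ν ∈ (0,1) and the Γᵢ are fixed matrices. If (M*, ρ*, ξ*) is an optimal solution, then the number of indices i with ξᵢ* > 0 is at most νm; equivalently, at most a fraction ν of the constraints are violated (ξᵢ* > 0) at optimality. -/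
/-!
With `M` frozen at the optimum, the problem in `(ρ, ξ)` is a linear program. If `ε > 0` is the
smallest positive slack, lowering `ρ` by `ε` together with every positive slack stays feasible and
changes the objective by `ε - ε · #{i | 0 < ξᵢ} / (νm)`, which optimality forces to be `≥ 0`.
-/

open Matrix Finset

theorem exists_pos_le_of_pos {ι : Type*} [Fintype ι] (ξ : ι → ℝ) :
    ∃ ε > 0, ∀ i, 0 < ξ i → ε ≤ ξ i := by
  rcases ({i | 0 < ξ i} : Finset ι).eq_empty_or_nonempty with hS | hS
  · exact ⟨1, one_pos, fun i hi => absurd hi (filter_eq_empty_iff.1 hS (mem_univ i))⟩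
  · exact ⟨_, (lt_inf'_iff hS).2 fun i hi => (mem_filter.1 hi).2,
      fun i hi => inf'_le _ (mem_filter.2 ⟨mem_univ i, hi⟩)⟩

theorem sum_sub_ite_pos {ι : Type*} [Fintype ι] (ξ : ι → ℝ) (ε : ℝ) :
    ∑ i, (ξ i - if 0 < ξ i then ε else 0) = ∑ i, ξ i - #{i | 0 < ξ i} * ε := by
  rw [sum_sub_distrib, ← sum_filter, sum_const, nsmul_eq_mul]

theorem mul_card_pos_slack_le_one {ι : Type*} [Fintype ι] {c : ℝ} (a ξ : ι → ℝ) (ρ : ℝ)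
    (hfeas : ∀ i, ρ - ξ i ≤ a i) (hξ : ∀ i, 0 ≤ ξ i)
    (hopt : ∀ (ρ' : ℝ) (ξ' : ι → ℝ), (∀ i, ρ' - ξ' i ≤ a i) → (∀ i, 0 ≤ ξ' i) →
      -ρ + c * ∑ i, ξ i ≤ -ρ' + c * ∑ i, ξ' i) :
    c * #{i | 0 < ξ i} ≤ 1 := by
  obtain ⟨ε, hε, hεξ⟩ := exists_pos_le_of_pos ξ
  have hshift := hopt (ρ - ε) (fun i => ξ i - if 0 < ξ i then ε else 0)
    (fun i => by split_ifs <;> linarith [hfeas i])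
    (fun i => by
      split_ifs with h
      · linarith [hεξ i h]
      · linarith [hξ i])
  rw [sum_sub_ite_pos] at hshift
  have : c * #{i | 0 < ξ i} * ε ≤ 1 * ε := by linarith
  exact le_of_mul_le_mul_right this hε

theorem ocsvm_nu_property_general {n m : ℕ} (hm : 0 < m) (ν : ℝ) (hν : ν ∈ Set.Ioo (0:ℝ) 1)
    (Γ : Fin m → Matrix (Fin n) (Fin n) ℝ)
    (C : Set (Matrix (Fin n) (Fin n) ℝ))
    (Mstar : Matrix (Fin n) (Fin n) ℝ) (ρstar : ℝ) (ξstar : Fin m → ℝ)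
    -- feasibility of the optimal solution
    (hfeas : Mstar ∈ C ∧ (∀ i, (Mstarᵀ * Γ i).trace ≥ ρstar - ξstar i) ∧ ∀ i, 0 ≤ ξstar i)
    -- optimality among all feasible points
    (hopt : ∀ M ∈ C, ∀ ρ : ℝ, ∀ ξ : Fin m → ℝ,
      (∀ i, (Mᵀ * Γ i).trace ≥ ρ - ξ i) → (∀ i, 0 ≤ ξ i) →
      (1/2) * (Mstarᵀ * Mstar).trace - ρstar + (1/(ν * m)) * ∑ i, ξstar i ≤
        (1/2) * (Mᵀ * M).trace - ρ + (1/(ν * m)) * ∑ i, ξ i) :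
    ((Finset.univ.filter (fun i => 0 < ξstar i)).card : ℝ) ≤ ν * m := by
  obtain ⟨hMC, hcon, hξ⟩ := hfeas
  have hνm : 0 < ν * m := mul_pos hν.1 (Nat.cast_pos.2 hm)
  have hslack := mul_card_pos_slack_le_one (c := 1 / (ν * m)) (fun i => (Mstarᵀ * Γ i).trace)
    ξstar ρstar hcon hξ fun ρ ξ hρξ hξ' => by linarith [hopt Mstar hMC ρ ξ hρξ hξ']
  rwa [one_div_mul_eq_div, div_le_one hνm] at hslack

/-- ν-property of the soft OC-SVM: at an optimal solution of
min (1/2)‖M‖_F² − ρ + (1/(νm)) Σ ξᵢ s.t. ⟨M,Γᵢ⟩ ≥ ρ − ξᵢ, ξᵢ ≥ 0, M ∈ C,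
at most a fraction ν of the slacks are strictly positive. -/
theorem ocsvm_nu_property {n m : ℕ} (hm : 0 < m) (ν : ℝ) (hν : ν ∈ Set.Ioo (0:ℝ) 1)
    (Γ : Fin m → Matrix (Fin n) (Fin n) ℝ)
    (C : Set (Matrix (Fin n) (Fin n) ℝ)) (hC : ∀ M ∈ C, M.IsSymm)
    (Mstar : Matrix (Fin n) (Fin n) ℝ) (ρstar : ℝ) (ξstar : Fin m → ℝ)
    -- feasibility of the optimal solution
    (hfeas : Mstar ∈ C ∧ (∀ i, (Mstarᵀ * Γ i).trace ≥ ρstar - ξstar i) ∧ ∀ i, 0 ≤ ξstar i)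
    -- optimality among all feasible points
    (hopt : ∀ M ∈ C, ∀ ρ : ℝ, ∀ ξ : Fin m → ℝ,
      (∀ i, (Mᵀ * Γ i).trace ≥ ρ - ξ i) → (∀ i, 0 ≤ ξ i) →
      (1/2) * (Mstarᵀ * Mstar).trace - ρstar + (1/(ν * m)) * ∑ i, ξstar i ≤
        (1/2) * (Mᵀ * M).trace - ρ + (1/(ν * m)) * ∑ i, ξ i) :
    ((Finset.univ.filter (fun i => 0 < ξstar i)).card : ℝ) ≤ ν * m :=
  ocsvm_nu_property_general hm ν hν Γ C Mstar ρstar ξstar hfeas hopt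
end
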